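/- Let A be a commutative Banach algebra whose character space is discrete at a point e in the sense that the characteristic function χ_e of {e} belongs to A (viewing A as an algebra of functions on its character space with χ_e·χ_e = χ_e and φ_e(χ_e) = 1, and a·χ_e = φ_e(a)·χ_e for all a ∈ A). Then the topologically invariant φ_e-mean on A* is unique and equals χ_e. -/

import Mathlib

open scoped Topology
open Filter

noncomputable def fdot {A : Type*} [NonUnitalNormedRing A] [NormedSpace ℂ A]
    [IsScalarTower ℂ A A] [SMulCommClass ℂ A A] (f : A →L[ℂ] ℂ) (a : A) : A →L[ℂ] ℂ :=
  f.comp (ContinuousLinearMap.mul ℂ A a)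

section InvariantMean

variable {A : Type*}

@[simp]
theorem fdot_apply [NonUnitalNormedRing A] [NormedSpace ℂ A] [IsScalarTower ℂ A A]
    [SMulCommClass ℂ A A] (f : A →L[ℂ] ℂ) (a b : A) : fdot f a b = f (a * b) :=
  rfl

/-- A topologically invariant `φ`-mean on `A*`; `fdot f a` is the dual module action `f · a`. -/
def IsInvariantMean [NonUnitalNormedRing A] [NormedSpace ℂ A] [IsScalarTower ℂ A A]
    [SMulCommClass ℂ A A] (φ : A →L[ℂ] ℂ) (m : (A →L[ℂ] ℂ) →L[ℂ] ℂ) : Prop :=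
  m φ = 1 ∧ ∀ (f : A →L[ℂ] ℂ) (a : A), m (fdot f a) = φ a * m f

variable [NonUnitalNormedCommRing A] [NormedSpace ℂ A] [IsScalarTower ℂ A A]
  [SMulCommClass ℂ A A] {φ : A →L[ℂ] ℂ} {χ : A}

theorem fdot_eq_smul_of_mul_eq_smul (hact : ∀ a : A, a * χ = φ a • χ) (f : A →L[ℂ] ℂ) :
    fdot f χ = f χ • φ := by
  ext b
  rw [fdot_apply, mul_comm, hact, map_smul, smul_apply, smul_eq_mul,
    smul_eq_mul, mul_comm]

theorem IsInvariantMean.apply_eq_of_mul_eq_smul {m : (A →L[ℂ] ℂ) →L[ℂ] ℂ}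
    (hm : IsInvariantMean φ m) (hφχ : φ χ = 1) (hact : ∀ a : A, a * χ = φ a • χ)
    (f : A →L[ℂ] ℂ) : m f = f χ :=
  calc m f = φ χ * m f := by rw [hφχ, one_mul]
    _ = m (fdot f χ) := (hm.2 f χ).symm
    _ = f χ := by rw [fdot_eq_smul_of_mul_eq_smul hact, map_smul, hm.1, smul_eq_mul, mul_one]

end InvariantMean

theorem stmt16 {A : Type*} [NonUnitalNormedCommRing A] [NormedSpace ℂ A]
    [IsScalarTower ℂ A A] [SMulCommClass ℂ A A]
    (φ : A →L[ℂ] ℂ)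
    (χ : A) (hφχ : φ χ = 1)
    (hact : ∀ a : A, a * χ = φ a • χ) :
    ∀ m : (A →L[ℂ] ℂ) →L[ℂ] ℂ,
      (m φ = 1 ∧ ∀ (f : A →L[ℂ] ℂ) (a : A), m (fdot f a) = φ a * m f) →
      ∀ f : A →L[ℂ] ℂ, m f = f χ :=
  fun _ hm => IsInvariantMean.apply_eq_of_mul_eq_smul hm hφχ hact
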